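/- Let R be a subring of a ring Q, and let I ⊆ J be ideals of R with J invertible with respect to Q. Then I = J · (J^{-1}I), where J^{-1}I = {x ∈ R : Jx ⊆ I}. -/

import Mathlib

open Pointwise

variable {Q : Type*} [Ring Q] (R : Subring Q)

/-- A left ideal `I` is two-sided if it is also closed under right multiplication. -/
def IsTwoSided (I : Ideal R) : Prop := ∀ x ∈ I, ∀ r : R, x * r ∈ I

/-- The underlying subset of `Q` of an ideal of the subring `R`. -/
def idealSet (I : Ideal R) : Set Q := (↑) '' (I : Set R)

/-- An ideal `J` of `R` is invertible with respect to `Q` if there is an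
`(R,R)`-subbimodule `J* ⊆ Q` with `J·J* = J*·J = R`, the products being the additive
subgroups of `Q` generated by the respective sets of products. -/
def QInvertible (J : Ideal R) : Prop :=
  ∃ Jstar : AddSubgroup Q,
    (∀ r ∈ R, ∀ x ∈ Jstar, r * x ∈ Jstar ∧ x * r ∈ Jstar) ∧
    (AddSubgroup.closure (idealSet R J * (Jstar : Set Q)) : Set Q) = (R : Set Q) ∧
    (AddSubgroup.closure ((Jstar : Set Q) * idealSet R J) : Set Q) = (R : Set Q)

/-- For a two-sided ideal `J` and an ideal `I`, the ideal `J⁻¹I = {x : R | Jx ⊆ I}`. -/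
def lquot (J I : Ideal R) (hJ : IsTwoSided R J) : Ideal R where
  carrier := {x : R | ∀ j ∈ J, j * x ∈ I}
  add_mem' := by
    intro x y hx hy j hj
    rw [mul_add]
    exact I.add_mem (hx j hj) (hy j hj)
  zero_mem' := by
    intro j hj
    simpa using I.zero_mem
  smul_mem' := by
    intro c x hx j hj
    rw [smul_eq_mul, ← mul_assoc]
    exact hx (j * c) (hJ j hj c)

/-! The factorization `a = a·1 = Σ jₖ (sₖ a)` from `1 = Σ jₖ sₖ ∈ J·J*`: each `sₖ a` lies in
`J*·J = R`, and `J (sₖ a) ⊆ (J·J*) a ⊆ R a ⊆ I`, so `sₖ a ∈ J⁻¹I`. -/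

theorem AddSubgroup.mul_right_mem_of_mem_closure {S : Set Q} {M : AddSubgroup Q} {a x : Q}
    (hS : ∀ y ∈ S, y * a ∈ M) (hx : x ∈ AddSubgroup.closure S) : x * a ∈ M :=
  AddSubgroup.closure_le (K := M.comap (AddMonoidHom.mulRight a)) |>.mpr hS hx

theorem mul_mem_of_closure_mul_eq {A B S : Set Q}
    (h : (AddSubgroup.closure (A * B) : Set Q) = S) {a b : Q} (ha : a ∈ A) (hb : b ∈ B) :
    a * b ∈ S :=
  h ▸ AddSubgroup.subset_closure (Set.mul_mem_mul ha hb)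

variable {R} in
theorem mul_lquot_le {I J : Ideal R} (hJ : IsTwoSided R J) : J * lquot R J I hJ ≤ I :=
  Ideal.mul_le.mpr fun j hj _ hx => hx j hj

variable {R} in
theorem mk_mul_mem_lquot {I J : Ideal R} (hJ : IsTwoSided R J) {Jstar : Set Q}
    (hJJs : (AddSubgroup.closure (idealSet R J * Jstar) : Set Q) = R)
    {s : Q} (hs : s ∈ Jstar) {a : R} (ha : a ∈ I) (hsa : s * a ∈ R) :
    ⟨s * a, hsa⟩ ∈ lquot R J I hJ := by
  intro j hj
  have hjs : (j : Q) * s ∈ R := mul_mem_of_closure_mul_eq hJJs ⟨j, hj, rfl⟩ hs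
  have : j * ⟨s * a, hsa⟩ = ⟨j * s, hjs⟩ * a := Subtype.ext (mul_assoc _ _ _).symm
  exact this ▸ I.mul_mem_left _ ha

theorem invertible_factorization (I J : Ideal R)
    (hJ : IsTwoSided R J) (hIJ : I ≤ J) (hinv : QInvertible R J) :
    I = J * lquot R J I hJ := by
  obtain ⟨Jstar, -, hJJs, hJsJ⟩ := hinv
  refine le_antisymm (fun a ha => ?_) (mul_lquot_le hJ)
  let M : AddSubgroup Q := (J * lquot R J I hJ).toAddSubgroup.map R.subtype.toAddMonoidHom
  have hone : (1 : Q) ∈ AddSubgroup.closure (idealSet R J * (Jstar : Set Q)) := by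
    rw [← SetLike.mem_coe, hJJs]; exact R.one_mem
  have hgen : ∀ y ∈ idealSet R J * (Jstar : Set Q), y * a ∈ M := by
    rintro _ ⟨_, ⟨j, hj, rfl⟩, s, hs, rfl⟩
    have hsa : s * a ∈ R := mul_mem_of_closure_mul_eq hJsJ hs ⟨a, hIJ ha, rfl⟩
    exact ⟨j * ⟨s * a, hsa⟩, Ideal.mul_mem_mul hj (mk_mul_mem_lquot hJ hJJs hs ha hsa),
      (mul_assoc _ _ _).symm⟩
  obtain ⟨b, hb, hba⟩ := one_mul (a : Q) ▸ AddSubgroup.mul_right_mem_of_mem_closure hgen hone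
  exact Subtype.ext hba ▸ hb
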